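/- For every y ∈ ℓ∞, every m ∈ ℕ, and every operator A in the convex hull of {σ_n : 1 ≤ n ≤ m}, setting s = (I−T)y, one has |Σ_{i=k+1}^{k+r} (A s)_i| ≤ 2m‖y‖_{ℓ∞} for all k ≥ 0 and r ≥ 1. In particular, for each fixed n with 1 ≤ n ≤ m, |Σ_{i=k+1}^{k+r} (σ_n s)_i| ≤ 2n‖y‖_{ℓ∞}. -/

import Mathlib

open Filter BoundedContinuousFunction

noncomputable section

/-- `ℓ∞`: the space of bounded real sequences (indexed from `0`). -/
abbrev LInf : Type := BoundedContinuousFunction ℕ ℝ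

/-- The translation (shift) operator `T(x₁,x₂,…) = (0,x₁,x₂,…)` (0-indexed). -/
def shift (x : LInf) : LInf :=
  BoundedContinuousFunction.ofNormedAddCommGroup
    (fun n => if n = 0 then 0 else x (n - 1)) continuous_of_discreteTopology ‖x‖
    (by
      intro n
      rcases n with _ | n
      · simp [norm_nonneg x]
      · simpa using x.norm_coe_le_norm n)

/-- The dilation operator `σ_m`, repeating each entry `m` times
(0-indexed: `(σ_m x)ₙ = x_{⌊n/m⌋}`, i.e. `(σ_m x)ₙ = x_{⌈n/m⌉}` in 1-indexed notation). -/
def dil (m : ℕ) (x : LInf) : LInf :=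
  x.compContinuous ⟨fun n => n / m, continuous_of_discreteTopology⟩

/-- The dilation operator `σ_m` as a bounded linear operator on `ℓ∞`. -/
def dilOp (m : ℕ) : LInf →L[ℝ] LInf :=
  LinearMap.mkContinuous
    { toFun := dil m
      map_add' := fun x y => by ext n; simp [dil]
      map_smul' := fun c x => by ext n; simp [dil] }
    1
    (fun x => by
      rw [one_mul]
      exact x.norm_compContinuous_le _)

/-! Since `σₙ T = Tⁿ σₙ`, the sequence `σₙ (I - T) y` is `x - Tⁿ x` with `x = σₙ y`. Its partial
sums telescope: the sum of its first `j` entries is the sum of the `n` entries of `x` just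
below `j`, hence at most `n ‖y‖` in absolute value, and a window sum is a difference of two
partial sums. The bound `2 m ‖y‖` then holds on each `σₙ` with `n ≤ m`, and passes to the
convex hull because it defines a convex set of operators. -/

open Finset

theorem sum_range_delay {M : Type*} [AddCommMonoid M] (f : ℕ → M) (n j : ℕ) :
    ∑ i ∈ range j, (if i < n then 0 else f (i - n)) = ∑ i ∈ range (j - n), f i := by
  induction j with
  | zero => simp
  | succ j ih =>
    rw [sum_range_succ, ih]
    split_ifs with h
    · rw [add_zero, Nat.sub_eq_zero_of_le h.le, Nat.sub_eq_zero_of_le h]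
    · rw [show j + 1 - n = j - n + 1 by omega, sum_range_succ]

theorem sum_range_sub_delay {G : Type*} [AddCommGroup G] (f : ℕ → G) (n j : ℕ) :
    ∑ i ∈ range j, (f i - if i < n then 0 else f (i - n)) = ∑ i ∈ Ico (j - n) j, f i := by
  rw [sum_sub_distrib, sum_range_delay, sum_Ico_eq_sub _ (Nat.sub_le j n)]

theorem norm_sum_Ico_sub_delay_le {E : Type*} [SeminormedAddCommGroup E] {f : ℕ → E} {B : ℝ}
    (hf : ∀ i, ‖f i‖ ≤ B) (n k r : ℕ) :
    ‖∑ i ∈ Ico k (k + r), (f i - if i < n then 0 else f (i - n))‖ ≤ 2 * n * B := by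
  have partial_sum_le (j : ℕ) :
      ‖∑ i ∈ range j, (f i - if i < n then 0 else f (i - n))‖ ≤ n * B := by
    rw [sum_range_sub_delay]
    have hB : 0 ≤ B := (norm_nonneg _).trans (hf 0)
    calc ‖∑ i ∈ Ico (j - n) j, f i‖ ≤ ∑ i ∈ Ico (j - n) j, ‖f i‖ := norm_sum_le _ _
      _ ≤ #(Ico (j - n) j) • B := sum_le_card_nsmul _ _ _ fun i _ ↦ hf i
      _ ≤ n * B := by
        rw [nsmul_eq_mul, Nat.card_Ico]
        gcongr
        exact_mod_cast (by omega : j - (j - n) ≤ n)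
  rw [sum_Ico_eq_sub _ (Nat.le_add_right k r)]
  calc _ ≤ _ := norm_sub_le _ _
    _ ≤ n * B + n * B := add_le_add (partial_sum_le _) (partial_sum_le _)
    _ = 2 * n * B := by ring

theorem convex_setOf_abs_le {V : Type*} [AddCommGroup V] [Module ℝ V] {f : V → ℝ}
    (hf : IsLinearMap ℝ f) (c : ℝ) : Convex ℝ {v | |f v| ≤ c} := by
  simpa only [Set.preimage, Set.mem_Icc, ← abs_le] using (convex_Icc (-c) c).is_linear_preimage hf

theorem convex_setOf_abs_sum_apply_le (x : LInf) (s : Finset ℕ) (c : ℝ) :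
    Convex ℝ {S : LInf →L[ℝ] LInf | |∑ i ∈ s, S x i| ≤ c} :=
  convex_setOf_abs_le (f := fun S : LInf →L[ℝ] LInf ↦ ∑ i ∈ s, S x i)
    ⟨fun S S' ↦ by simp only [_root_.add_apply, BoundedContinuousFunction.add_apply,
        sum_add_distrib],
      fun a S ↦ by simp only [_root_.smul_apply, BoundedContinuousFunction.smul_apply,
        smul_eq_mul, mul_sum]⟩ c

theorem dilOp_apply (n : ℕ) (x : LInf) (i : ℕ) : dilOp n x i = x (i / n) := rfl

theorem dilOp_shift_apply {n : ℕ} (hn : 1 ≤ n) (x : LInf) (i : ℕ) :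
    dilOp n (shift x) i = if i < n then 0 else dilOp n x (i - n) := by
  simp only [dilOp_apply, shift, BoundedContinuousFunction.coe_ofNormedAddCommGroup]
  by_cases h : i < n
  · simp [h, Nat.div_eq_of_lt h]
  · have hi : i / n = (i - n) / n + 1 := by
      rw [← Nat.add_div_right _ hn, Nat.sub_add_cancel (not_lt.mp h)]
    simp [h, hi]

theorem abs_sum_Ico_dilOp_sub_shift_le (y : LInf) {n : ℕ} (hn : 1 ≤ n) (k r : ℕ) :
    |∑ i ∈ Ico k (k + r), dilOp n (y - shift y) i| ≤ 2 * n * ‖y‖ := by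
  simp only [map_sub, BoundedContinuousFunction.coe_sub, Pi.sub_apply, dilOp_shift_apply hn]
  exact norm_sum_Ico_sub_delay_le (fun i ↦ y.norm_coe_le_norm (i / n)) n k r

theorem abs_sum_dilation_shift_difference_le_general (y : LInf) (m : ℕ) :
    (∀ A ∈ convexHull ℝ {S : LInf →L[ℝ] LInf | ∃ n : ℕ, 1 ≤ n ∧ n ≤ m ∧ S = dilOp n},
      ∀ k r : ℕ, 1 ≤ r →
        |∑ i ∈ Finset.Ico k (k + r), (A (y - shift y)) i| ≤ 2 * m * ‖y‖) ∧
    ∀ n : ℕ, 1 ≤ n → n ≤ m → ∀ k r : ℕ, 1 ≤ r →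
      |∑ i ∈ Finset.Ico k (k + r), (dilOp n (y - shift y)) i| ≤ 2 * n * ‖y‖ := by
  refine ⟨fun A hA k r _ ↦ ?_, fun n hn _ k r _ ↦ abs_sum_Ico_dilOp_sub_shift_le y hn k r⟩
  refine convexHull_min ?_ (convex_setOf_abs_sum_apply_le _ _ _) hA
  rintro _ ⟨n, hn, hnm, rfl⟩
  calc _ ≤ 2 * n * ‖y‖ := abs_sum_Ico_dilOp_sub_shift_le y hn k r
    _ ≤ 2 * m * ‖y‖ := by gcongr

/-- For `s = (I - T)y` and `A` in the convex hull of `{σ_n : 1 ≤ n ≤ m}`, the sum of any `r`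
consecutive entries of `As` is at most `2m‖y‖_∞` in absolute value; in particular, for each
fixed `n` with `1 ≤ n ≤ m`, the sum of any `r` consecutive entries of `σ_n s` is at most
`2n‖y‖_∞` in absolute value. -/
theorem abs_sum_dilation_shift_difference_le (y : LInf) (m : ℕ) (hm : 1 ≤ m) :
    (∀ A ∈ convexHull ℝ {S : LInf →L[ℝ] LInf | ∃ n : ℕ, 1 ≤ n ∧ n ≤ m ∧ S = dilOp n},
      ∀ k r : ℕ, 1 ≤ r →
        |∑ i ∈ Finset.Ico k (k + r), (A (y - shift y)) i| ≤ 2 * m * ‖y‖) ∧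
    ∀ n : ℕ, 1 ≤ n → n ≤ m → ∀ k r : ℕ, 1 ≤ r →
      |∑ i ∈ Finset.Ico k (k + r), (dilOp n (y - shift y)) i| ≤ 2 * n * ‖y‖ :=
  abs_sum_dilation_shift_difference_le_general y m

end
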